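/- arXiv:2101.02689 — 2 statements merged into one kernel-verified Lean document; each statement's English description precedes it below -/
import Mathlib

section
/- Let h : ℝ → ℝ be differentiable and strictly concave, and for α > 0 define G_α(s) = h(s) + log s − s/α on s > 0. If s̄(α) is a critical point of G_α (i.e., h'(s̄) + 1/s̄ − 1/α = 0) for each α and G_α is strictly concave, then s̄ is monotonically increasing in α. -/
theorem stmt13 (h : ℝ → ℝ) (hdiff : Differentiable ℝ h)
    (hconc : StrictConcaveOn ℝ Set.univ h)
    (sbar : ℝ → ℝ)
    (hpos : ∀ α > (0 : ℝ), 0 < sbar α)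
    (hcrit : ∀ α > (0 : ℝ), deriv h (sbar α) + 1 / sbar α - 1 / α = 0)
    (hGconc : ∀ α > (0 : ℝ),
      StrictConcaveOn ℝ (Set.Ioi 0) (fun s => h s + Real.log s - s / α)) :
    ∀ α₁ α₂ : ℝ, 0 < α₁ → α₁ ≤ α₂ → sbar α₁ ≤ sbar α₂ := by
  intro α₁ α₂ hα₁ hle
  have hα₂ : 0 < α₂ := lt_of_lt_of_le hα₁ hle
  have hs₁ := hpos α₁ hα₁
  have hs₂ := hpos α₂ hα₂
  by_contra hcon
  push_neg at hcon
  have hanti : StrictAntiOn (deriv h) Set.univ :=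
    hconc.strictAntiOn_deriv (fun x _ => hdiff x)
  have hd : deriv h (sbar α₂) > deriv h (sbar α₁) :=
    hanti (Set.mem_univ _) (Set.mem_univ _) hcon
  have hinv : 1 / sbar α₂ > 1 / sbar α₁ := by
    apply one_div_lt_one_div_of_lt hs₂ hcon
  have h1 := hcrit α₁ hα₁
  have h2 := hcrit α₂ hα₂
  have hinvα : 1 / α₂ ≤ 1 / α₁ := one_div_le_one_div_of_le hα₁ hle
  linarith
end

section
/- Let F : ℝ → ℝ be differentiable and for α > 0 define H_α(m) = F(m) − m²/(2α). If m̄(α) is the unique maximizer of the strictly concave H_α and α̃ < α, then m̄(α̃)² ≤ m̄(α)². -/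
theorem stmt14 (F : ℝ → ℝ) (hF : Differentiable ℝ F)
    (mbar : ℝ → ℝ)
    (hconc : ∀ α > (0 : ℝ),
      StrictConcaveOn ℝ Set.univ (fun m => F m - m ^ 2 / (2 * α)))
    (hmax : ∀ α > (0 : ℝ),
      IsMaxOn (fun m => F m - m ^ 2 / (2 * α)) Set.univ (mbar α))
    (hfoc : ∀ α > (0 : ℝ), deriv F (mbar α) = mbar α / α)
    (α αt : ℝ) (hαt : 0 < αt) (hlt : αt < α) :
    (mbar αt) ^ 2 ≤ (mbar α) ^ 2 := by
  have hα : 0 < α := hαt.trans hlt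
  have h1 := hmax α hα (Set.mem_univ (mbar αt))
  have h2 := hmax αt hαt (Set.mem_univ (mbar α))
  simp only [Set.mem_setOf_eq] at h1 h2
  have hne : αt ≠ 0 := ne_of_gt hαt
  have hne' : α ≠ 0 := ne_of_gt hα
  have h1' : F (mbar αt) * (2*α) - mbar αt ^ 2 ≤ F (mbar α) * (2*α) - mbar α ^ 2 := by
    have := mul_le_mul_of_nonneg_right h1 (show (0:ℝ) ≤ 2*α by positivity)
    rwa [sub_mul, sub_mul, div_mul_cancel₀ _ (show (2*α) ≠ 0 by positivity),
      div_mul_cancel₀ _ (show (2*α) ≠ 0 by positivity)] at this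
  have h2' : F (mbar α) * (2*αt) - mbar α ^ 2 ≤ F (mbar αt) * (2*αt) - mbar αt ^ 2 := by
    have := mul_le_mul_of_nonneg_right h2 (show (0:ℝ) ≤ 2*αt by positivity)
    rwa [sub_mul, sub_mul, div_mul_cancel₀ _ (show (2*αt) ≠ 0 by positivity),
      div_mul_cancel₀ _ (show (2*αt) ≠ 0 by positivity)] at this
  nlinarith [mul_le_mul_of_nonneg_right h1' hαt.le, mul_le_mul_of_nonneg_right h2' hα.le]
end
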